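/- arXiv:1407.5511 — 2 statements merged into one kernel-verified Lean document; each statement's English description precedes it below -/
import Mathlib

section
/- Let Σ be a 3-manifold with coframe (ω¹, ω², ω³) satisfying the Finsler surface structure equations, and dual frame (ê₁, ê₂, ê₃). Then the rank-2 distribution D spanned by ê₁ and ê₃ is bracket generating: at every point, D together with the brackets [ê₃, ê₁] spans the whole tangent space TΣ, i.e. [D, D] + D = TΣ. -/
noncomputable section

open Set

/-- The model space of the 3-manifold `Σ`. -/
abbrev E3 : Type := EuclideanSpace ℝ (Fin 3)

/-- Exterior derivative of a 1-form `ω` on `E3`: `dω(v,w) = (∂_v ω)(w) - (∂_w ω)(v)`. -/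
def extd (ω : E3 → E3 →L[ℝ] ℝ) (x : E3) (v w : E3) : ℝ :=
  fderiv ℝ ω x v w - fderiv ℝ ω x w v

/-- Wedge product of two 1-forms evaluated on `(v, w)`. -/
def wedge (α β : E3 → E3 →L[ℝ] ℝ) (x : E3) (v w : E3) : ℝ :=
  α x v * β x w - α x w * β x v

/-- Lie bracket of two vector fields on `E3`: `[X,Y] = ∂_X Y - ∂_Y X`. -/
def lieb (X Y : E3 → E3) (x : E3) : E3 :=
  fderiv ℝ Y x (X x) - fderiv ℝ X x (Y x)

/-- If the pairing `ω x (e x)` is constant in `x`, differentiating gives a Leibniz-type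
identity. -/
lemma dual_deriv (ω : E3 → E3 →L[ℝ] ℝ) (e : E3 → E3) (c : ℝ)
    (hω : ContDiff ℝ (⊤ : ℕ∞) ω) (he : ContDiff ℝ (⊤ : ℕ∞) e) (h : ∀ x, ω x (e x) = c) (x v : E3) :
    ω x (fderiv ℝ e x v) = -(fderiv ℝ ω x v) (e x) := by
  have hz : fderiv ℝ (fun y => ω y (e y)) x = 0 := by
    have : (fun y => ω y (e y)) = fun _ => c := funext h
    rw [this, fderiv_fun_const]; rfl
  rw [fderiv_clm_apply (hω.differentiable (by simp) x) (he.differentiable (by simp) x)] at hz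
  have := congrArg (fun L : E3 →L[ℝ] ℝ => L v) hz
  simp [ContinuousLinearMap.add_apply] at this
  linarith

/-- Pairing of a 1-form with a Lie bracket of fields on which it is constant. -/
lemma omega_lieb (ω : E3 → E3 →L[ℝ] ℝ) (X Y : E3 → E3) (cX cY : ℝ)
    (hω : ContDiff ℝ (⊤ : ℕ∞) ω) (hX : ContDiff ℝ (⊤ : ℕ∞) X) (hY : ContDiff ℝ (⊤ : ℕ∞) Y)
    (hcX : ∀ x, ω x (X x) = cX) (hcY : ∀ x, ω x (Y x) = cY) (x : E3) :
    ω x (lieb X Y x) = extd ω x (Y x) (X x) := by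
  have h1 := dual_deriv ω Y cY hω hY hcY x (X x)
  have h2 := dual_deriv ω X cX hω hX hcX x (Y x)
  simp [lieb, extd, map_sub, h1, h2]
  ring

/-- Linear-algebra core: if `(u1,u2,u3)` is dual to a coframe and `v` has `ω2 v = -1`,
then `u1, u3, v` span. -/
lemma span_aux (ω1 ω2 ω3 : E3 →L[ℝ] ℝ) (u1 u2 u3 : E3)
    (hd11 : ω1 u1 = 1) (hd12 : ω1 u2 = 0) (hd13 : ω1 u3 = 0)
    (hd21 : ω2 u1 = 0) (hd22 : ω2 u2 = 1) (hd23 : ω2 u3 = 0)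
    (hd31 : ω3 u1 = 0) (hd32 : ω3 u2 = 0) (hd33 : ω3 u3 = 1)
    (v : E3) (a b : ℝ) (h1 : ω1 v = a) (h2 : ω2 v = -1) (h3 : ω3 v = b) :
    Submodule.span ℝ ({u1, u3, v} : Set E3) = ⊤ := by
  have hli : LinearIndependent ℝ ![u1, u2, u3] := by
    rw [Fintype.linearIndependent_iff]
    intro g hg i
    have h1 := congrArg ω1 hg
    have h2 := congrArg ω2 hg
    have h3 := congrArg ω3 hg
    simp [Fin.sum_univ_three, hd11, hd12, hd13, hd21, hd22, hd23, hd31, hd32, hd33] at h1 h2 h3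
    fin_cases i <;> simp [h1, h2, h3]
  have hcard : Fintype.card (Fin 3) = Module.finrank ℝ E3 := by simp
  let B := basisOfLinearIndependentOfCardEqFinrank hli hcard
  have hB : ∀ i, B i = ![u1, u2, u3] i := fun i => by
    simp [B, coe_basisOfLinearIndependentOfCardEqFinrank]
  have key : u2 = a • u1 + b • u3 - v := by
    have hrepr : ∀ w : E3, ∀ j, (fun j => ![ω1, ω2, ω3] j w) j = B.repr w j := by
      intro w j
      conv_lhs => rw [← B.sum_repr w]
      have : ∀ i : Fin 3, ![ω1, ω2, ω3] j (B i) = if i = j then 1 else 0 := by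
        intro i
        fin_cases i <;> fin_cases j <;>
          simp [hB, hd11, hd12, hd13, hd21, hd22, hd23, hd31, hd32, hd33]
      simp [map_sum, Fin.sum_univ_three, this, -Module.Basis.sum_repr]
      fin_cases j <;> simp
    apply B.repr.injective
    ext j
    rw [← hrepr u2 j, ← hrepr (a • u1 + b • u3 - v) j]
    fin_cases j <;> simp [hd11, hd12, hd13, hd21, hd22, hd23, hd31, hd32, hd33, h1, h2, h3]
  rw [eq_top_iff, ← B.span_eq, Submodule.span_le]
  rintro w ⟨i, rfl⟩
  have m1 : u1 ∈ Submodule.span ℝ ({u1, u3, v} : Set E3) :=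
    Submodule.subset_span (by simp)
  have m3 : u3 ∈ Submodule.span ℝ ({u1, u3, v} : Set E3) :=
    Submodule.subset_span (by simp)
  have mv : v ∈ Submodule.span ℝ ({u1, u3, v} : Set E3) :=
    Submodule.subset_span (by simp)
  have m2 : u2 ∈ Submodule.span ℝ ({u1, u3, v} : Set E3) := by
    rw [key]; exact Submodule.sub_mem _ (Submodule.add_mem _ (Submodule.smul_mem _ _ m1)
      (Submodule.smul_mem _ _ m3)) mv
  fin_cases i <;> simpa [hB] using (by assumption : _)

/-- The rank-2 distribution `D = ⟨ê₁, ê₃⟩` is bracket generating in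
one step: at each point, `D` together with the bracket `[ê₃,ê₁]` spans the whole
tangent space, i.e. `[D,D] + D = TΣ`. -/
theorem stmt4 (ω1 ω2 ω3 : E3 → E3 →L[ℝ] ℝ) (I J K : E3 → ℝ)
    (hω1 : ContDiff ℝ (⊤ : ℕ∞) ω1) (hω2 : ContDiff ℝ (⊤ : ℕ∞) ω2) (hω3 : ContDiff ℝ (⊤ : ℕ∞) ω3)
    (hI : ContDiff ℝ (⊤ : ℕ∞) I) (hJ : ContDiff ℝ (⊤ : ℕ∞) J) (hK : ContDiff ℝ (⊤ : ℕ∞) K)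
    (hcoframe : ∀ x, LinearIndependent ℝ ![ω1 x, ω2 x, ω3 x])
    (hs1 : ∀ x v w, extd ω1 x v w = -I x * wedge ω1 ω3 x v w + wedge ω2 ω3 x v w)
    (hs2 : ∀ x v w, extd ω2 x v w = -(wedge ω1 ω3 x v w))
    (hs3 : ∀ x v w, extd ω3 x v w = K x * wedge ω1 ω2 x v w - J x * wedge ω1 ω3 x v w)
    (e1 e2 e3 : E3 → E3)
    (he1 : ContDiff ℝ (⊤ : ℕ∞) e1) (he2 : ContDiff ℝ (⊤ : ℕ∞) e2) (he3 : ContDiff ℝ (⊤ : ℕ∞) e3)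
    -- `(ê₁, ê₂, ê₃)` is the dual frame of the coframe `(ω¹, ω², ω³)`
    (hd11 : ∀ x, ω1 x (e1 x) = 1) (hd12 : ∀ x, ω1 x (e2 x) = 0) (hd13 : ∀ x, ω1 x (e3 x) = 0)
    (hd21 : ∀ x, ω2 x (e1 x) = 0) (hd22 : ∀ x, ω2 x (e2 x) = 1) (hd23 : ∀ x, ω2 x (e3 x) = 0)
    (hd31 : ∀ x, ω3 x (e1 x) = 0) (hd32 : ∀ x, ω3 x (e2 x) = 0) (hd33 : ∀ x, ω3 x (e3 x) = 1) :
    ∀ x, Submodule.span ℝ ({e1 x, e3 x, lieb e3 e1 x} : Set E3) = ⊤ := by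
  intro x
  have hb2 : ω2 x (lieb e3 e1 x) = -1 := by
    rw [omega_lieb ω2 e3 e1 0 0 hω2 he3 he1 hd23 hd21 x, hs2]
    simp [wedge, hd11, hd13, hd31, hd33]
  exact span_aux (ω1 x) (ω2 x) (ω3 x) (e1 x) (e2 x) (e3 x)
    (hd11 x) (hd12 x) (hd13 x) (hd21 x) (hd22 x) (hd23 x) (hd31 x) (hd32 x) (hd33 x)
    (lieb e3 e1 x) _ _ rfl hb2 rfl
end
end

section
/- Let X be a smooth manifold, θ¹, …, θˢ pointwise linearly independent 1-forms on X, φ a 1-form on X, and Z = X × ℝˢ with coordinates λ = (λ₁,…,λ_s). Define ψ = π*φ + Σᵢ λᵢ π*θⁱ on Z, where π: Z → X is the projection. Then for any curve ĉ = (c, λ): (a,b) → Z, if ĉ'(t) ⌟ dψ = 0 for all t, then contracting with the vertical vectors ∂/∂λᵢ shows c*θⁱ = 0 for all i, i.e. the projection c is an integral curve of the Pfaffian system {θ¹,…,θˢ}. -/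
open Set

/-- (First structural step of Griffiths' method.)  Let
`θ¹,…,θˢ` be pointwise linearly independent 1-forms on `X`, `φ` a 1-form, and on
`Z = X × ℝˢ` set `ψ = π*φ + Σᵢ λᵢ π*θⁱ`.  If a curve `ĉ = (c, λ)` in `Z` satisfies
`ĉ'(t) ⌟ dψ = 0`, then (contracting with the vertical vectors `∂/∂λᵢ`)
`c*θⁱ = 0` for all `i`: the projection `c` is an integral curve of `{θ¹,…,θˢ}`. -/
theorem stmt17 {E : Type*} [NormedAddCommGroup E] [NormedSpace ℝ E] (s : ℕ)
    (θ : Fin s → E → E →L[ℝ] ℝ) (φ : E → E →L[ℝ] ℝ)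
    (hθs : ∀ i, ContDiff ℝ (⊤ : ℕ∞) (θ i)) (hφ : ContDiff ℝ (⊤ : ℕ∞) φ)
    (hθ : ∀ x, LinearIndependent ℝ (fun i => θ i x))
    (ψ : E × (Fin s → ℝ) → (E × (Fin s → ℝ)) →L[ℝ] ℝ) (hψs : ContDiff ℝ (⊤ : ℕ∞) ψ)
    (hψ : ∀ p u, ψ p u = φ p.1 u.1 + ∑ i, p.2 i * θ i p.1 u.1)
    (a b : ℝ) (c : ℝ → E) (l : ℝ → Fin s → ℝ)
    (hc : ContDiff ℝ (⊤ : ℕ∞) c) (hl : ContDiff ℝ (⊤ : ℕ∞) l)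
    -- ĉ'(t) ⌟ dψ = 0 along ĉ = (c, l)
    (hchar : ∀ t ∈ Set.Ioo a b, ∀ w : E × (Fin s → ℝ),
      fderiv ℝ ψ (c t, l t) (deriv c t, deriv l t) w
        - fderiv ℝ ψ (c t, l t) w (deriv c t, deriv l t) = 0) :
    ∀ i, ∀ t ∈ Set.Ioo a b, θ i (c t) (deriv c t) = 0 := by
  intro i t ht
  set p : E × (Fin s → ℝ) := (c t, l t) with hp
  set v : E × (Fin s → ℝ) := (deriv c t, deriv l t) with hv
  set w : E × (Fin s → ℝ) := (0, Pi.single i 1) with hw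
  have hmem := hchar t ht w
  have hψd : DifferentiableAt ℝ ψ p := (hψs.differentiable (by simp)).differentiableAt
  -- swap: evaluating the derivative of ψ equals differentiating the evaluation
  have key : ∀ u z : E × (Fin s → ℝ),
      fderiv ℝ ψ p u z = fderiv ℝ (fun q => ψ q z) p u := by
    intro u z
    rw [fderiv_clm_apply hψd (differentiableAt_const z)]
    simp
  -- first term vanishes: ψ q w = 0 for all q since w.1 = 0
  have hB : fderiv ℝ ψ p v w = 0 := by
    rw [key]
    have h0 : (fun q : E × (Fin s → ℝ) => ψ q w) = fun _ => (0 : ℝ) := by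
      funext q; simp [hψ, hw]
    rw [h0, fderiv_fun_const]
    simp
  -- second term: contraction with the vertical vector gives θ i
  have hdg : DifferentiableAt ℝ (fun q : E × (Fin s → ℝ) => ψ q v) p :=
    hψd.clm_apply (differentiableAt_const v)
  have hC : fderiv ℝ ψ p w v = θ i (c t) (deriv c t) := by
    rw [key, ← hdg.lineDeriv_eq_fderiv]
    have haff : (fun r : ℝ => ψ (p + r • w) v)
        = fun r : ℝ => ψ p v + r * θ i p.1 v.1 := by
      funext r
      simp only [hψ, hw, Prod.fst_add, Prod.snd_add, Prod.smul_mk, smul_zero,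
        add_zero, Pi.add_apply, Pi.smul_apply, Pi.single_apply, smul_eq_mul]
      rw [add_assoc]
      congr 1
      rw [Finset.sum_congr rfl (fun j _ => add_mul (p.2 j) _ _),
        Finset.sum_add_distrib]
      congr 1
      rw [Finset.sum_congr rfl (fun j _ => by
        rw [mul_ite, mul_one, mul_zero, ite_mul, zero_mul])]
      simp [Finset.sum_ite_eq']
    have hder : HasDerivAt (fun r : ℝ => ψ p v + r * θ i p.1 v.1)
        (θ i p.1 v.1) 0 := by
      simpa using (((hasDerivAt_id (0 : ℝ)).mul_const (θ i p.1 v.1)).const_add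
        (ψ p v))
    rw [lineDeriv, haff, hder.deriv]
  rw [hB, hC] at hmem
  linarith
end
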